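/- Let ρ, σ, ρ₁, σ₁ ∈ ℝ, set R(t) = t² + ρt + σ, q(t) = R(t)³, and p(t) = a₀ + a₁t + a₂t² + a₃t³ + a₄t⁴ + a₅t⁵ with a₀ = 4σ²(σ+σ₁−1), a₁ = 4σ(ρ₁σ + 3ρσ + 2σ₁ρ − 3ρ), a₂ = 12ρσ + 12σ² + 8ρρ₁σ − 3ρ² + 4σ₁ρ² + 12ρ²σ − 24σ + 8σ₁σ, a₃ = 16ρσ + 40σ + 8σ₁ρ + 4ρ₁ρ² + 8ρ₁σ + 4ρ³ + 2ρ² − 8ρ, a₄ = 9ρ² + 4σ₁ − 12σ + 8ρ₁ρ + 12ρ, a₅ = 4ρ₁. Let D ⊆ ℝ satisfy −x ∈ D whenever x ∈ D, let y : D → ℝ, set v(x) = y(−x), and assume y(x₀) ≠ v(x₀) for at least one x₀ ∈ D and q(y(x)) ≠ 0 and q(v(x)) ≠ 0 for all x ∈ D. Define V_I(x) = −p(y(x))/(4·q(y(x))). If the functions in the family 𝒰 = { yⁿ−vⁿ : n = 1,…,6 } ∪ { v⁶yⁿ − y⁶vⁿ : n = 1,…,5 } ∪ { yᵐvⁿ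 − vᵐyⁿ : 1 ≤ n < m ≤ 5 } (as functions D → ℝ) are linearly independent over ℝ, and if V_I(x) = V_I(−x) for all x ∈ D, then V_I(x) = 0 for all x ∈ D. -/

import Mathlib

/-!
Cross-multiplying `V_I(x) = V_I(-x)` gives `p(y) q(v) = p(v) q(y)` on `D`. Write
`p = ∑ aᵢ tⁱ` and `q = ∑ bⱼ tʲ` with `i, j ≤ 6`, where `a₆ = 0` and `b₆ = 1`. Pairing the terms
`(i, j)` and `(j, i)` turns `p(y) q(v) - p(v) q(y)` into
`∑_{j < i ≤ 6} (aᵢ bⱼ - aⱼ bᵢ) (yⁱ vʲ - vⁱ yʲ)`, which is a linear combination of the family `𝒰`.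
By linear independence every coefficient vanishes. The coefficients at `(6, j)` are `-aⱼ`, so
`a₀ = ⋯ = a₅ = 0` and `p = 0`.
-/

/-- `q(t) = (t² + ρt + σ)³`, the denominator of Iwata's potential. -/
def iwataQ (ρ σ : ℝ) : ℝ → ℝ := fun t => (t ^ 2 + ρ * t + σ) ^ 3

/-- `p(t)`, the numerator polynomial of Iwata's potential. -/
def iwataP (ρ σ ρ₁ σ₁ : ℝ) : ℝ → ℝ := fun t =>
  4 * σ ^ 2 * (σ + σ₁ - 1)
    + (4 * σ * (ρ₁ * σ + 3 * ρ * σ + 2 * σ₁ * ρ - 3 * ρ)) * t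
    + (12 * ρ * σ + 12 * σ ^ 2 + 8 * ρ * ρ₁ * σ - 3 * ρ ^ 2 + 4 * σ₁ * ρ ^ 2
        + 12 * ρ ^ 2 * σ - 24 * σ + 8 * σ₁ * σ) * t ^ 2
    + (16 * ρ * σ + 40 * σ + 8 * σ₁ * ρ + 4 * ρ₁ * ρ ^ 2 + 8 * ρ₁ * σ + 4 * ρ ^ 3
        + 2 * ρ ^ 2 - 8 * ρ) * t ^ 3
    + (9 * ρ ^ 2 + 4 * σ₁ - 12 * σ + 8 * ρ₁ * ρ + 12 * ρ) * t ^ 4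
    + (4 * ρ₁) * t ^ 5

open Finset

abbrev CrossIndex := Fin 6 ⊕ Fin 5 ⊕ {p : Fin 5 × Fin 5 // p.2 < p.1}

theorem Fintype.sum_subtype_eq_sum_dite {α M : Type*} [Fintype α] [AddCommMonoid M]
    {p : α → Prop} [DecidablePred p] (f : Subtype p → M) :
    ∑ i, f i = ∑ a, if h : p a then f ⟨a, h⟩ else 0 := by
  rw [← Finset.sum_filter_of_ne (p := p) fun a _ h => by_contra fun hp => h (dif_neg hp),
    Finset.sum_subtype (p := p) _ fun _ => Finset.mem_filter_univ _]
  exact Fintype.sum_congr _ _ fun x => by rw [dif_pos x.2]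

section CrossDifference

variable {R : Type*} [CommRing R]

def crossMonomial (y v : R) : CrossIndex → R
  | Sum.inl n => y ^ ((n : ℕ) + 1) - v ^ ((n : ℕ) + 1)
  | Sum.inr (Sum.inl n) => v ^ 6 * y ^ ((n : ℕ) + 1) - y ^ 6 * v ^ ((n : ℕ) + 1)
  | Sum.inr (Sum.inr ⟨(m, n), _⟩) =>
      y ^ ((m : ℕ) + 1) * v ^ ((n : ℕ) + 1) - v ^ ((m : ℕ) + 1) * y ^ ((n : ℕ) + 1)

def crossCoeff (a b : ℕ → R) : CrossIndex → R
  | Sum.inl n => a ((n : ℕ) + 1) * b 0 - a 0 * b ((n : ℕ) + 1)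
  | Sum.inr (Sum.inl n) => a ((n : ℕ) + 1) * b 6 - a 6 * b ((n : ℕ) + 1)
  | Sum.inr (Sum.inr ⟨(m, n), _⟩) =>
      a ((m : ℕ) + 1) * b ((n : ℕ) + 1) - a ((n : ℕ) + 1) * b ((m : ℕ) + 1)

theorem sum_crossCoeff_mul_crossMonomial (a b : ℕ → R) (y v : R) :
    ∑ i, crossCoeff a b i * crossMonomial y v i
      = (∑ i ∈ range 7, a i * y ^ i) * (∑ j ∈ range 7, b j * v ^ j)
        - (∑ i ∈ range 7, a i * v ^ i) * (∑ j ∈ range 7, b j * y ^ j) := by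
  rw [Fintype.sum_sum_type, Fintype.sum_sum_type, Fintype.sum_subtype_eq_sum_dite,
    Fintype.sum_prod_type]
  simp only [crossCoeff, crossMonomial, Fin.sum_univ_succ, Fin.isValue, Fin.coe_ofNat_eq_mod,
    Nat.zero_mod, zero_add, pow_one, Fin.val_succ, Nat.reduceAdd, univ_unique,
    Fin.default_eq_zero, Fin.val_eq_zero, sum_const, card_singleton, one_smul, dite_eq_ite,
    Fin.succ_zero_eq_one, Fin.succ_one_eq_two, Fin.reduceSucc, sum_singleton, lt_self_iff_false,
    ↓reduceIte, not_lt_zero, add_zero, Fin.succ_pos, Fin.lt_one_iff, Fin.reduceEq, Fin.reduceLT,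
    sub_self, zero_mul, ite_self, sum_range_succ, range_one, pow_zero, mul_one]
  ring

theorem crossCoeff_eq_zero_of_linearIndependent {X : Type*} (a b : ℕ → R) (y v : X → R)
    (hU : LinearIndependent R fun i x => crossMonomial (y x) (v x) i)
    (h : ∀ x, (∑ i ∈ range 7, a i * y x ^ i) * (∑ j ∈ range 7, b j * v x ^ j)
      = (∑ i ∈ range 7, a i * v x ^ i) * (∑ j ∈ range 7, b j * y x ^ j)) :
    crossCoeff a b = 0 := by
  refine funext <| Fintype.linearIndependent_iff.mp hU _ <| funext fun x => ?_
  simp only [Finset.sum_apply, Pi.smul_apply, smul_eq_mul, Pi.zero_apply,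
    sum_crossCoeff_mul_crossMonomial, h, sub_self]

end CrossDifference

theorem eq_zero_of_crossCoeff_eq_zero {K : Type*} [Field K] {a b : ℕ → K} (ha : a 6 = 0)
    (hb : b 6 ≠ 0) (h : crossCoeff a b = 0) : ∀ i < 7, a i = 0 := by
  have h0 := congrFun h (.inl 5)
  have hs (n : Fin 5) := congrFun h (.inr (.inl n))
  simp only [crossCoeff, Fin.isValue, Fin.coe_ofNat_eq_mod, Nat.mod_succ, Nat.reduceAdd, ha,
    zero_mul, zero_sub, Pi.zero_apply, neg_eq_zero, mul_eq_zero, hb, or_false, sub_zero] at h0 hs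
  intro i hi
  interval_cases i
  exacts [h0, hs 0, hs 1, hs 2, hs 3, hs 4, ha]

def iwataPCoeff (ρ σ ρ₁ σ₁ : ℝ) : ℕ → ℝ
  | 0 => 4 * σ ^ 2 * (σ + σ₁ - 1)
  | 1 => 4 * σ * (ρ₁ * σ + 3 * ρ * σ + 2 * σ₁ * ρ - 3 * ρ)
  | 2 => 12 * ρ * σ + 12 * σ ^ 2 + 8 * ρ * ρ₁ * σ - 3 * ρ ^ 2 + 4 * σ₁ * ρ ^ 2
        + 12 * ρ ^ 2 * σ - 24 * σ + 8 * σ₁ * σ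
  | 3 => 16 * ρ * σ + 40 * σ + 8 * σ₁ * ρ + 4 * ρ₁ * ρ ^ 2 + 8 * ρ₁ * σ + 4 * ρ ^ 3
        + 2 * ρ ^ 2 - 8 * ρ
  | 4 => 9 * ρ ^ 2 + 4 * σ₁ - 12 * σ + 8 * ρ₁ * ρ + 12 * ρ
  | 5 => 4 * ρ₁
  | _ => 0

def iwataQCoeff (ρ σ : ℝ) : ℕ → ℝ
  | 0 => σ ^ 3
  | 1 => 3 * ρ * σ ^ 2
  | 2 => 3 * σ ^ 2 + 3 * ρ ^ 2 * σ
  | 3 => ρ ^ 3 + 6 * ρ * σ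
  | 4 => 3 * σ + 3 * ρ ^ 2
  | 5 => 3 * ρ
  | 6 => 1
  | _ => 0

theorem iwataP_eq_sum (ρ σ ρ₁ σ₁ t : ℝ) :
    iwataP ρ σ ρ₁ σ₁ t = ∑ i ∈ range 7, iwataPCoeff ρ σ ρ₁ σ₁ i * t ^ i := by
  simp [sum_range_succ, iwataP, iwataPCoeff]

theorem iwataQ_eq_sum (ρ σ t : ℝ) :
    iwataQ ρ σ t = ∑ i ∈ range 7, iwataQCoeff ρ σ i * t ^ i := by
  simp only [iwataQ, iwataQCoeff, sum_range_succ, range_one, sum_singleton, pow_zero, mul_one,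
    pow_one, one_mul]
  ring

theorem stmt_11 (ρ σ ρ₁ σ₁ : ℝ) (D : Set ℝ)
    (y v : ℝ → ℝ) (hv : ∀ x, v x = y (-x))
    (hq : ∀ x ∈ D, iwataQ ρ σ (y x) ≠ 0 ∧ iwataQ ρ σ (v x) ≠ 0)
    (hU : LinearIndependent ℝ
      (fun i : Fin 6 ⊕ Fin 5 ⊕ {p : Fin 5 × Fin 5 // p.2 < p.1} =>
        (fun x : D => match i with
          | Sum.inl n => y x ^ ((n : ℕ) + 1) - v x ^ ((n : ℕ) + 1)
          | Sum.inr (Sum.inl n) =>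
              v x ^ 6 * y x ^ ((n : ℕ) + 1) - y x ^ 6 * v x ^ ((n : ℕ) + 1)
          | Sum.inr (Sum.inr ⟨(m, n), _⟩) =>
              y x ^ ((m : ℕ) + 1) * v x ^ ((n : ℕ) + 1)
                - v x ^ ((m : ℕ) + 1) * y x ^ ((n : ℕ) + 1) : D → ℝ)))
    (hsymm : ∀ x ∈ D,
      -(iwataP ρ σ ρ₁ σ₁ (y x)) / (4 * iwataQ ρ σ (y x))
        = -(iwataP ρ σ ρ₁ σ₁ (y (-x))) / (4 * iwataQ ρ σ (y (-x)))) :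
    ∀ x ∈ D, -(iwataP ρ σ ρ₁ σ₁ (y x)) / (4 * iwataQ ρ σ (y x)) = 0 := by
  have hcross (x : D) : iwataP ρ σ ρ₁ σ₁ (y x) * iwataQ ρ σ (v x)
      = iwataP ρ σ ρ₁ σ₁ (v x) * iwataQ ρ σ (y x) := by
    obtain ⟨hqy, hqv⟩ := hq x x.2
    have h := hsymm x x.2
    rw [← hv, div_eq_div_iff (by positivity) (by positivity)] at h
    linarith
  have hcoeff := crossCoeff_eq_zero_of_linearIndependent _ _ (fun x : D => y x) (fun x => v x) hU
    fun x => by simpa only [iwataP_eq_sum, iwataQ_eq_sum] using hcross x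
  have hP := eq_zero_of_crossCoeff_eq_zero rfl one_ne_zero hcoeff
  intro x _
  rw [iwataP_eq_sum, sum_eq_zero fun i hi => by rw [hP i (mem_range.1 hi), zero_mul], neg_zero,
    zero_div]
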